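/- arXiv:1810.08585 — 2 statements merged into one kernel-verified Lean document; each statement's English description precedes it below -/
import Mathlib

section
/- In a distributive meet-semilattice, a proper filter F is irreducible if and only if for every a,b ∉ F there exist c ∉ F and f ∈ F such that a∧f ≤ c and b∧f ≤ c. -/
namespace DS

variable {A : Type*} [SemilatticeInf A] [OrderTop A]

/-- A filter: an upset containing the top element, closed under meets. -/
def IsFilt (F : Set A) : Prop :=
  IsUpperSet F ∧ ⊤ ∈ F ∧ ∀ ⦃a b : A⦄, a ∈ F → b ∈ F → a ⊓ b ∈ F

/-- An irreducible (prime) filter: a proper filter that is meet-irreducible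
among filters. -/
def IsIrred (F : Set A) : Prop :=
  IsFilt F ∧ F ≠ Set.univ ∧
    ∀ F₁ F₂ : Set A, IsFilt F₁ → IsFilt F₂ → F = F₁ ∩ F₂ → F = F₁ ∨ F = F₂

/-- An order ideal: a downset in which every pair of elements has an upper
bound in the set. -/
def IsOrdIdeal (I : Set A) : Prop :=
  IsLowerSet I ∧ ∀ a ∈ I, ∀ b ∈ I, ∃ c ∈ I, a ≤ c ∧ b ≤ c

/-- Distributivity for a meet-semilattice with top. -/
def IsDistrib (A : Type*) [SemilatticeInf A] [OrderTop A] : Prop :=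
  ∀ a b c : A, a ⊓ b ≤ c → ∃ a₁ b₁ : A, a ≤ a₁ ∧ b ≤ b₁ ∧ c = a₁ ⊓ b₁

/-- The set of irreducible filters of `A`, ordered by inclusion. -/
def Spec (A : Type*) [SemilatticeInf A] [OrderTop A] : Type _ :=
  {P : Set A // IsIrred P}

instance : PartialOrder (Spec A) := Subtype.partialOrder _

/-- `beta a` = the set of irreducible filters containing `a`. -/
def beta (a : A) : Set (Spec A) := {P : Spec A | a ∈ P.1}

/-- The topology on `Spec A` generated by the basis `{beta aᶜ : a ∈ A}`. -/
def specTop (A : Type*) [SemilatticeInf A] [OrderTop A] : TopologicalSpace (Spec A) :=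
  TopologicalSpace.generateFrom {s : Set (Spec A) | ∃ a : A, s = (beta a)ᶜ}

/-- Special basic saturated subsets: intersections of dually directed families
of basic opens `beta aᶜ`. -/
def SBS (Z : Set (Spec A)) : Prop :=
  ∃ L : Set A, (∀ a ∈ L, ∀ b ∈ L, ∃ c ∈ L, beta a ∪ beta b ⊆ beta c) ∧
    Z = ⋂ a ∈ L, (beta a)ᶜ

/-- The order ideal associated to a special basic saturated set. -/
def IA (Z : Set (Spec A)) : Set A := {a : A | beta a ∩ Z = ∅}

/-- The special basic saturated set associated to an order ideal. -/
def alphaI (I : Set A) : Set (Spec A) := {P : Spec A | P.1 ∩ I = ∅}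

/-- The filter associated to a closed set. -/
def FY (Y : Set (Spec A)) : Set A := {a : A | Y ⊆ beta a}

/-- The multirelation `R_m` on the dual space. -/
def Rm (m : A → A) (P : Spec A) (Z : Set (Spec A)) : Prop :=
  {a : A | m a ∈ P.1} ∩ IA Z = ∅

/-- The multirelation `G_m` on the dual space. -/
def Gm (m : A → A) (P : Spec A) (Y : Set (Spec A)) : Prop :=
  FY Y ⊆ {a : A | m a ∈ P.1}

/-- The composed relation `R_m²`. -/
def Rm2 (m : A → A) (P : Spec A) (Z : Set (Spec A)) : Prop :=
  ∃ S : Set (Spec A), SBS S ∧ Rm m P S ∧ ∀ x ∈ S, Rm m x Z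

end DS

/-! The condition on `F` says that for `a, b ∉ F` the filters generated by `F ∪ {a}` and
`F ∪ {b}` still meet outside `F`. Any two filters strictly above `F` contain two such filters,
so this is exactly irreducibility. -/

namespace DS

variable {A : Type*} [SemilatticeInf A] {F : Set A}

/-- The filter generated by `F ∪ {a}` when `F` is a filter. -/
def adjoin (F : Set A) (a : A) : Set A := {x | ∃ f ∈ F, a ⊓ f ≤ x}

theorem subset_adjoin (a : A) : F ⊆ adjoin F a := fun x hx => ⟨x, hx, inf_le_right⟩

variable [OrderTop A]

theorem IsFilt.isFilt_adjoin (hF : IsFilt F) (a : A) : IsFilt (adjoin F a) := by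
  refine ⟨fun x y hxy ⟨f, hf, hle⟩ => ⟨f, hf, hle.trans hxy⟩, ⟨⊤, hF.2.1, le_top⟩, ?_⟩
  rintro x y ⟨f, hf, hfx⟩ ⟨g, hg, hgy⟩
  exact ⟨f ⊓ g, hF.2.2 hf hg, le_inf ((inf_le_inf_left a inf_le_left).trans hfx)
    ((inf_le_inf_left a inf_le_right).trans hgy)⟩

theorem IsFilt.mem_adjoin_self (hF : IsFilt F) (a : A) : a ∈ adjoin F a :=
  ⟨⊤, hF.2.1, inf_le_left⟩

theorem IsIrred.exists_common_bound (hF : IsIrred F) {a b : A} (ha : a ∉ F) (hb : b ∉ F) :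
    ∃ c ∉ F, ∃ f ∈ F, a ⊓ f ≤ c ∧ b ⊓ f ≤ c := by
  obtain ⟨hfilt, -, hirr⟩ := hF
  have hne : F ≠ adjoin F a ∩ adjoin F b := fun h => by
    rcases hirr _ _ (IsFilt.isFilt_adjoin hfilt a) (IsFilt.isFilt_adjoin hfilt b) h with h' | h'
    · exact ha (h' ▸ IsFilt.mem_adjoin_self hfilt a)
    · exact hb (h' ▸ IsFilt.mem_adjoin_self hfilt b)
  have hsub : F ⊆ adjoin F a ∩ adjoin F b := Set.subset_inter (subset_adjoin a) (subset_adjoin b)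
  obtain ⟨c, ⟨⟨f, hf, hac⟩, ⟨g, hg, hbc⟩⟩, hc⟩ := Set.exists_of_ssubset (hsub.ssubset_of_ne hne)
  exact ⟨c, hc, f ⊓ g, hfilt.2.2 hf hg, (inf_le_inf_left a inf_le_left).trans hac,
    (inf_le_inf_left b inf_le_right).trans hbc⟩

theorem isIrred_of_exists_common_bound (hF : IsFilt F) (hprop : F ≠ Set.univ)
    (h : ∀ a b : A, a ∉ F → b ∉ F → ∃ c ∉ F, ∃ f ∈ F, a ⊓ f ≤ c ∧ b ⊓ f ≤ c) : IsIrred F := by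
  refine ⟨hF, hprop, fun F₁ F₂ h₁ h₂ heq => ?_⟩
  have hsub₁ : F ⊆ F₁ := heq ▸ Set.inter_subset_left
  have hsub₂ : F ⊆ F₂ := heq ▸ Set.inter_subset_right
  by_contra! hne
  obtain ⟨a, ha₁, haF⟩ := Set.exists_of_ssubset (hsub₁.ssubset_of_ne hne.1)
  obtain ⟨b, hb₂, hbF⟩ := Set.exists_of_ssubset (hsub₂.ssubset_of_ne hne.2)
  obtain ⟨c, hc, f, hf, hac, hbc⟩ := h a b haF hbF
  have hc₁ : c ∈ F₁ := h₁.1 hac (h₁.2.2 ha₁ (hsub₁ hf))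
  have hc₂ : c ∈ F₂ := h₂.1 hbc (h₂.2.2 hb₂ (hsub₂ hf))
  exact hc (heq ▸ ⟨hc₁, hc₂⟩)

end DS

open DS Set

theorem stmt2_general {A : Type*} [SemilatticeInf A] [OrderTop A]
    (F : Set A) (hF : IsFilt F) (hprop : F ≠ Set.univ) :
    IsIrred F ↔
      ∀ a b : A, a ∉ F → b ∉ F →
        ∃ c ∉ F, ∃ f ∈ F, a ⊓ f ≤ c ∧ b ⊓ f ≤ c :=
  ⟨fun hirr _ _ ha hb => IsIrred.exists_common_bound hirr ha hb,
    isIrred_of_exists_common_bound hF hprop⟩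

theorem stmt2 {A : Type*} [SemilatticeInf A] [OrderTop A] (hA : IsDistrib A)
    (F : Set A) (hF : IsFilt F) (hprop : F ≠ Set.univ) :
    IsIrred F ↔
      ∀ a b : A, a ∉ F → b ∉ F →
        ∃ c ∉ F, ∃ f ∈ F, a ⊓ f ≤ c ∧ b ⊓ f ≤ c :=
  stmt2_general F hF hprop
end

section
/- Let ⟨A,m⟩ be a monotonic distributive semilattice. Define m_{R_m} on upsets of X(A) by P ∈ m_{R_m}(U) iff for all Z ∈ R_m(P), Z ∩ U ≠ ∅, where (P,Z) ∈ R_m iff m⁻¹(P) ∩ I_A(Z) = ∅. Then m_{R_m}(β(a)) = β(ma) for all a ∈ A; consequently β: A → Up(X(A)) is an injective homomorphism of monotonic distributive semilattices. -/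
open DS Set

/-!
Every failure `c ≰ a` is witnessed by an irreducible filter: by Zorn there is a filter maximal
among those containing `c` and avoiding `a`, and such a filter is meet-irreducible, since any two
strictly larger filters both contain `a`. Hence `β` is an order embedding preserving `⊓` and `⊤`,
and `β(a)ᶜ` is a special basic saturated set. If `m a ∉ P`, monotonicity of `m` gives
`R_m(P, β(a)ᶜ)`, and `β(a)ᶜ` misses `β(a)`; if `m a ∈ P`, then `a ∉ I_A(Z)` for every
`Z ∈ R_m(P)`, i.e. `Z` meets `β(a)`.
-/

namespace DS

variable {A : Type*} [SemilatticeInf A] [OrderTop A]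

theorem isFilt_Ici (c : A) : IsFilt (Ici c) :=
  ⟨isUpperSet_Ici c, le_top, fun _ _ => le_inf⟩

theorem isFilt_sUnion {C : Set (Set A)} (hC : ∀ F ∈ C, IsFilt F)
    (hchain : IsChain (· ⊆ ·) C) (hne : C.Nonempty) : IsFilt (⋃₀ C) := by
  refine ⟨isUpperSet_sUnion fun F hF => (hC F hF).1, ?_, ?_⟩
  · obtain ⟨F, hF⟩ := hne
    exact ⟨F, hF, (hC F hF).2.1⟩
  · rintro u v ⟨F, hF, hu⟩ ⟨G, hG, hv⟩
    rcases hchain.total hF hG with hFG | hGF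
    · exact ⟨G, hG, (hC G hG).2.2 (hFG hu) hv⟩
    · exact ⟨F, hF, (hC F hF).2.2 hu (hGF hv)⟩

theorem exists_maximal_isFilt_not_mem {c a : A} (h : ¬c ≤ a) :
    ∃ F, c ∈ F ∧ Maximal (fun G => IsFilt G ∧ a ∉ G) F := by
  obtain ⟨F, hcF, hF⟩ := zorn_subset_nonempty {G | IsFilt G ∧ a ∉ G}
    (fun C hCS hchain hne => ⟨⋃₀ C,
      ⟨isFilt_sUnion (fun F hF => (hCS hF).1) hchain hne,
        fun ⟨F, hF, ha⟩ => (hCS hF).2 ha⟩,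
      fun _ => subset_sUnion_of_mem⟩)
    (Ici c) ⟨isFilt_Ici c, h⟩
  exact ⟨F, hcF le_rfl, hF⟩

theorem isIrred_of_maximal {a : A} {F : Set A}
    (hF : Maximal (fun G => IsFilt G ∧ a ∉ G) F) : IsIrred F := by
  refine ⟨hF.1.1, fun h => hF.1.2 (h ▸ mem_univ a), fun F₁ F₂ h₁ h₂ hF₁₂ => ?_⟩
  by_contra! hne
  have mem_of_ne {G : Set A} (hG : IsFilt G) (hFG : F ⊆ G) (hne : F ≠ G) : a ∈ G :=
    by_contra fun ha => hne (hF.eq_of_subset ⟨hG, ha⟩ hFG)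
  have ha₁ := mem_of_ne h₁ (hF₁₂ ▸ inter_subset_left) hne.1
  have ha₂ := mem_of_ne h₂ (hF₁₂ ▸ inter_subset_right) hne.2
  exact hF.1.2 (hF₁₂ ▸ ⟨ha₁, ha₂⟩)

theorem exists_spec_mem_not_mem {c a : A} (h : ¬c ≤ a) :
    ∃ P : Spec A, c ∈ P.1 ∧ a ∉ P.1 := by
  obtain ⟨F, hcF, hF⟩ := exists_maximal_isFilt_not_mem h
  exact ⟨⟨F, isIrred_of_maximal hF⟩, hcF, hF.1.2⟩

theorem beta_mono : Monotone (beta : A → Set (Spec A)) :=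
  fun _ _ h P hP => P.2.1.1 h hP

theorem beta_subset_beta_iff {a b : A} : beta a ⊆ beta b ↔ a ≤ b := by
  refine ⟨fun h => ?_, fun h => beta_mono h⟩
  by_contra hab
  obtain ⟨P, haP, hbP⟩ := exists_spec_mem_not_mem hab
  exact hbP (h haP)

theorem beta_injective : Function.Injective (beta : A → Set (Spec A)) := fun _ _ h =>
  le_antisymm (beta_subset_beta_iff.1 h.le) (beta_subset_beta_iff.1 h.ge)

theorem beta_inf (a b : A) : beta (a ⊓ b) = beta a ∩ beta b :=
  ext fun P => ⟨fun h => ⟨P.2.1.1 inf_le_left h, P.2.1.1 inf_le_right h⟩,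
    fun h => P.2.1.2.2 h.1 h.2⟩

theorem beta_top : beta (⊤ : A) = univ :=
  eq_univ_of_forall fun P => P.2.1.2.1

theorem sbs_compl_beta (a : A) : SBS (beta a)ᶜ :=
  ⟨{a}, by simp, by simp⟩

theorem mem_IA_iff {a : A} {Z : Set (Spec A)} : a ∈ IA Z ↔ Z ⊆ (beta a)ᶜ := by
  rw [subset_compl_iff_disjoint_right, disjoint_comm, disjoint_iff_inter_eq_empty]
  rfl

theorem rm_compl_beta {m : A → A} (hm : Monotone m) {P : Spec A} {a : A} (ha : m a ∉ P.1) :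
    Rm m P (beta a)ᶜ :=
  eq_empty_of_forall_notMem fun _ ⟨hmx, hx⟩ =>
    ha (P.2.1.1 (hm (beta_subset_beta_iff.1 (compl_subset_compl.1 (mem_IA_iff.1 hx)))) hmx)

theorem Rm.inter_beta_nonempty {m : A → A} {P : Spec A} {Z : Set (Spec A)} (hZ : Rm m P Z)
    {a : A} (ha : m a ∈ P.1) : (Z ∩ beta a).Nonempty := by
  rw [nonempty_iff_ne_empty, inter_comm]
  exact fun h => (eq_empty_iff_forall_notMem.1 hZ) a ⟨ha, h⟩

/-- The operator `m_{R_m}` on upsets of `X(A)`. -/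
def mBox (m : A → A) (U : Set (Spec A)) : Set (Spec A) :=
  {P | ∀ Z : Set (Spec A), SBS Z → Rm m P Z → (Z ∩ U).Nonempty}

theorem mBox_beta {m : A → A} (hm : Monotone m) (a : A) : mBox m (beta a) = beta (m a) := by
  ext P
  refine ⟨fun hP => ?_, fun ha Z _ hZ => hZ.inter_beta_nonempty ha⟩
  by_contra ha
  obtain ⟨Q, hQa, hQ⟩ := hP _ (sbs_compl_beta a) (rm_compl_beta hm ha)
  exact hQa hQ

end DS

theorem stmt12_general {A : Type*} [SemilatticeInf A] [OrderTop A]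
    (m : A → A) (hm : ∀ a b : A, a ≤ b → m a ≤ m b) :
    (∀ a : A,
      {P : Spec A | ∀ Z : Set (Spec A), SBS Z → Rm m P Z → (Z ∩ beta a).Nonempty} =
        beta (m a)) ∧
    Function.Injective (beta : A → Set (Spec A)) ∧
    (∀ a b : A, beta (a ⊓ b) = beta a ∩ beta b) ∧
    beta (⊤ : A) = (Set.univ : Set (Spec A)) :=
  ⟨mBox_beta (fun a b => hm a b), beta_injective, beta_inf, beta_top⟩

theorem stmt12 {A : Type*} [SemilatticeInf A] [OrderTop A] (hA : IsDistrib A)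
    (m : A → A) (hm : ∀ a b : A, a ≤ b → m a ≤ m b) :
    (∀ a : A,
      {P : Spec A | ∀ Z : Set (Spec A), SBS Z → Rm m P Z → (Z ∩ beta a).Nonempty} =
        beta (m a)) ∧
    Function.Injective (beta : A → Set (Spec A)) ∧
    (∀ a b : A, beta (a ⊓ b) = beta a ∩ beta b) ∧
    beta (⊤ : A) = (Set.univ : Set (Spec A)) :=
  stmt12_general m hm
end
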